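/- For all integers 2 ≤ k ≤ n, the function B ↦ cot(𝒫_k(B)) is concave on Γ_I: for all Hermitian B, B' ∈ Γ_I and s ∈ [0,1], cot(𝒫_k(s B + (1−s) B')) ≥ s · cot(𝒫_k(B)) + (1−s) · cot(𝒫_k(B')). (For B ∈ Γ_I and k ≥ 2 one has 𝒫_k(B) ∈ (0, π), so the cotangent is defined.) -/

import Mathlib

/-!
For a finite index set `I`, the function `λ ↦ cot (∑ i ∈ I, arccot λᵢ)` is concave where the
angle sum is below `π`: adding an index acts on the cotangent by the addition formula
`(x, y) ↦ (x y - 1) / (x + y)`, which is concave and increasing in `x` on `x + y > 0`.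
As `cot` decreases on `(0, π)`, `cot ∘ 𝒫_k` is the minimum of these functions over `|I| = k - 1`,
hence concave, and it is symmetric. A concave symmetric function of the eigenvalues is concave
on Hermitian matrices: in an eigenbasis of `s B + (1 - s) B'` the eigenvalues are the convex
combination of the diagonals of `B` and `B'`, and by Schur these diagonals are doubly stochastic
images of the eigenvalues of `B` and `B'`, on which a concave symmetric function can only grow,
by Birkhoff's theorem and Jensen's inequality.
-/

open Real

/-- `arccot x = π/2 - arctan x`, a strictly decreasing bijection from `ℝ` onto `(0, π)`. -/
noncomputable def arccot (x : ℝ) : ℝ := π / 2 - Real.arctan x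

/-- `𝒫_{k,n}(λ)`: the maximum over subsets `I ⊆ {1,…,n}` with `|I| = k-1` of
`∑_{i ∈ I} arccot (λ i)`. -/
noncomputable def Pfun (n k : ℕ) (lam : Fin n → ℝ) : ℝ :=
  sSup {x : ℝ | ∃ s : Finset (Fin n), s.card = k - 1 ∧ x = ∑ i ∈ s, arccot (lam i)}

open Set Finset
open scoped Matrix

namespace Real

lemma cot_eq_tan_pi_div_two_sub (x : ℝ) : cot x = tan (π / 2 - x) := by
  rw [cot_eq_cos_div_sin, tan_eq_sin_div_cos, sin_pi_div_two_sub, cos_pi_div_two_sub]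

lemma strictAntiOn_cot : StrictAntiOn cot (Ioo 0 π) := by
  intro x ⟨hx0, hxπ⟩ y ⟨hy0, hyπ⟩ hxy
  rw [cot_eq_tan_pi_div_two_sub, cot_eq_tan_pi_div_two_sub]
  exact strictMonoOn_tan ⟨by linarith, by linarith⟩ ⟨by linarith, by linarith⟩ (by linarith)

noncomputable def cotAdd (x y : ℝ) : ℝ := (x * y - 1) / (x + y)

-- Where `sin (θ + φ)` vanishes, both sides are `0` by the convention `x / 0 = 0`.
lemma cot_add {θ φ : ℝ} (hθ : sin θ ≠ 0) (hφ : sin φ ≠ 0) :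
    cot (θ + φ) = cotAdd (cot θ) (cot φ) := by
  have hsum : cot θ + cot φ = sin (θ + φ) / (sin θ * sin φ) := by
    rw [cot_eq_cos_div_sin, cot_eq_cos_div_sin, sin_add]
    field_simp
    ring
  have hprod : cot θ * cot φ - 1 = cos (θ + φ) / (sin θ * sin φ) := by
    rw [cot_eq_cos_div_sin, cot_eq_cos_div_sin, cos_add]
    field_simp
  rw [cotAdd, hsum, hprod, div_div_div_cancel_right₀ (mul_ne_zero hθ hφ), cot_eq_cos_div_sin]

lemma cotAdd_le_cotAdd_left {x x' y : ℝ} (h : 0 < x + y) (hx : x ≤ x') :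
    cotAdd x y ≤ cotAdd x' y := by
  rw [cotAdd, cotAdd, div_le_div_iff₀ h (by linarith)]
  nlinarith [mul_nonneg (sub_nonneg.2 hx) (sq_nonneg y)]

lemma concaveOn_cotAdd : ConcaveOn ℝ {p : ℝ × ℝ | 0 < p.1 + p.2} (fun p => cotAdd p.1 p.2) := by
  refine ⟨convex_halfSpace_gt (LinearMap.fst ℝ ℝ ℝ + LinearMap.snd ℝ ℝ ℝ).isLinear 0, ?_⟩
  rintro ⟨x₁, y₁⟩ (h₁ : 0 < x₁ + y₁) ⟨x₂, y₂⟩ (h₂ : 0 < x₂ + y₂) a b ha hb hab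
  obtain rfl : b = 1 - a := by linarith
  simp only [Prod.smul_mk, Prod.mk_add_mk, smul_eq_mul, cotAdd]
  have hz : 0 < (a * x₁ + (1 - a) * x₂) + (a * y₁ + (1 - a) * y₂) := by
    rcases ha.eq_or_lt with rfl | ha'
    · linarith
    · nlinarith
  have key : ((a * x₁ + (1 - a) * x₂) * (a * y₁ + (1 - a) * y₂) - 1) /
        ((a * x₁ + (1 - a) * x₂) + (a * y₁ + (1 - a) * y₂))
      - (a * ((x₁ * y₁ - 1) / (x₁ + y₁)) + (1 - a) * ((x₂ * y₂ - 1) / (x₂ + y₂)))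
      = a * (1 - a) * ((x₁ * y₂ - x₂ * y₁) ^ 2 + ((x₁ + y₁) - (x₂ + y₂)) ^ 2) /
        ((x₁ + y₁) * (x₂ + y₂) * ((a * x₁ + (1 - a) * x₂) + (a * y₁ + (1 - a) * y₂))) := by
    field_simp
    ring
  have : 0 ≤ a * (1 - a) * ((x₁ * y₂ - x₂ * y₁) ^ 2 + ((x₁ + y₁) - (x₂ + y₂)) ^ 2) /
      ((x₁ + y₁) * (x₂ + y₂) * ((a * x₁ + (1 - a) * x₂) + (a * y₁ + (1 - a) * y₂))) := by
    have : 0 ≤ 1 - a := by linarith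
    positivity
  linarith

end Real

lemma ConcaveOn.cotAdd_linearMap {E : Type*} [AddCommGroup E] [Module ℝ E] {S : Set E} {c : E → ℝ}
    (hc : ConcaveOn ℝ S c) (ℓ : E →ₗ[ℝ] ℝ) :
    ConcaveOn ℝ {x ∈ S | 0 < c x + ℓ x} (fun x => cotAdd (c x) (ℓ x)) := by
  refine ⟨(hc.add (ℓ.concaveOn hc.1)).convex_gt 0, ?_⟩
  rintro x ⟨hxS, hx⟩ y ⟨hyS, hy⟩ a b ha hb hab
  have hcomb := concaveOn_cotAdd.2 (x := (c x, ℓ x)) (y := (c y, ℓ y)) hx hy ha hb hab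
  simp only [Prod.smul_mk, Prod.mk_add_mk, smul_eq_mul] at hcomb
  have hpos : 0 < (a * c x + b * c y) + (a * ℓ x + b * ℓ y) := by
    simpa using concaveOn_cotAdd.1 (x := (c x, ℓ x)) (y := (c y, ℓ y)) hx hy ha hb hab
  calc a • cotAdd (c x) (ℓ x) + b • cotAdd (c y) (ℓ y)
      ≤ cotAdd (a * c x + b * c y) (a * ℓ x + b * ℓ y) := hcomb
    _ ≤ cotAdd (c (a • x + b • y)) (ℓ (a • x + b • y)) := by
      rw [map_add, map_smul, map_smul, smul_eq_mul, smul_eq_mul]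
      exact cotAdd_le_cotAdd_left hpos (hc.2 hxS hyS ha hb hab)

lemma arccot_pos (x : ℝ) : 0 < arccot x := by
  have := arctan_lt_pi_div_two x
  rw [arccot]; linarith

lemma arccot_lt_pi (x : ℝ) : arccot x < π := by
  have := neg_pi_div_two_lt_arctan x
  rw [arccot]; linarith

lemma arccot_mem_Ioo (x : ℝ) : arccot x ∈ Ioo 0 π := ⟨arccot_pos x, arccot_lt_pi x⟩

lemma cot_arccot (x : ℝ) : cot (arccot x) = x := by
  rw [cot_eq_tan_pi_div_two_sub, arccot, sub_sub_cancel, tan_arctan]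

lemma add_arccot_lt_pi_iff {θ : ℝ} (hθ : θ ∈ Ioo 0 π) (y : ℝ) :
    θ + arccot y < π ↔ 0 < cot θ + y := by
  have h : π - arccot y = arccot (-y) := by rw [arccot, arccot, arctan_neg]; ring
  rw [← lt_sub_iff_add_lt, h, ← strictAntiOn_cot.lt_iff_gt (arccot_mem_Ioo _) hθ, cot_arccot]
  exact neg_lt_iff_pos_add

section AngleSum

variable {ι : Type*}

/-- For `I = univ`, membership of the eigenvalues is the condition defining `Γ_I`. -/
def gammaSet (I : Finset ι) : Set (ι → ℝ) := {lam | ∑ i ∈ I, arccot (lam i) < π}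

lemma gammaSet_anti {I J : Finset ι} (hIJ : I ⊆ J) : gammaSet J ⊆ gammaSet I := fun _ h =>
  (sum_le_sum_of_subset_of_nonneg hIJ fun _ _ _ => (arccot_pos _).le).trans_lt h

lemma comp_perm_mem_gammaSet_univ [Fintype ι] (σ : Equiv.Perm ι) {lam : ι → ℝ}
    (h : lam ∈ gammaSet univ) : lam ∘ σ ∈ gammaSet univ := by
  simpa only [gammaSet, mem_ofPred_eq, Function.comp_apply,
    Equiv.sum_comp σ (fun i => arccot (lam i))] using h

lemma sum_arccot_mem_Ioo {I : Finset ι} (hI : I.Nonempty) {lam : ι → ℝ} (h : lam ∈ gammaSet I) :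
    ∑ i ∈ I, arccot (lam i) ∈ Ioo 0 π :=
  ⟨sum_pos (fun _ _ => arccot_pos _) hI, h⟩

lemma gammaSet_cons {a : ι} {I : Finset ι} (ha : a ∉ I) (hI : I.Nonempty) :
    gammaSet (cons a I ha) =
      {lam ∈ gammaSet I | 0 < cot (∑ i ∈ I, arccot (lam i)) + lam a} := by
  ext lam
  simp only [gammaSet, mem_ofPred_eq, sum_cons]
  constructor
  · intro h
    have hI' : ∑ i ∈ I, arccot (lam i) < π := by linarith [arccot_pos (lam a)]
    exact ⟨hI', (add_arccot_lt_pi_iff (sum_arccot_mem_Ioo hI hI') _).1 (by linarith)⟩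
  · rintro ⟨hI', h⟩
    linarith [(add_arccot_lt_pi_iff (sum_arccot_mem_Ioo hI hI') _).2 h]

lemma cot_sum_arccot_cons {a : ι} {I : Finset ι} (ha : a ∉ I) (hI : I.Nonempty) {lam : ι → ℝ}
    (h : lam ∈ gammaSet I) :
    cot (∑ i ∈ cons a I ha, arccot (lam i)) = cotAdd (cot (∑ i ∈ I, arccot (lam i))) (lam a) := by
  have hsin : ∀ θ ∈ Ioo 0 π, sin θ ≠ 0 := fun θ hθ => (sin_pos_of_pos_of_lt_pi hθ.1 hθ.2).ne'
  rw [sum_cons, add_comm, cot_add (hsin _ (sum_arccot_mem_Ioo hI h)) (hsin _ (arccot_mem_Ioo _)),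
    cot_arccot]

lemma concaveOn_cot_sum_arccot {I : Finset ι} (hI : I.Nonempty) :
    ConcaveOn ℝ (gammaSet I) (fun lam => cot (∑ i ∈ I, arccot (lam i))) := by
  induction hI using Nonempty.cons_induction with
  | singleton a =>
    have : gammaSet {a} = univ := eq_univ_of_forall fun lam => by
      simpa [gammaSet] using arccot_lt_pi (lam a)
    simp only [this, sum_singleton, cot_arccot]
    exact (LinearMap.proj a : (ι → ℝ) →ₗ[ℝ] ℝ).concaveOn convex_univ
  | cons a I ha hI ih =>
    rw [gammaSet_cons ha hI]
    exact (ih.cotAdd_linearMap (LinearMap.proj a)).congr fun lam h =>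
      (cot_sum_arccot_cons ha hI h.1).symm

end AngleSum

section Pfun

variable {n k : ℕ}

lemma finite_Pfun_set (lam : Fin n → ℝ) :
    {x : ℝ | ∃ s : Finset (Fin n), s.card = k - 1 ∧ x = ∑ i ∈ s, arccot (lam i)}.Finite :=
  (finite_range fun s : Finset (Fin n) => ∑ i ∈ s, arccot (lam i)).subset
    fun _ ⟨s, _, hx⟩ => ⟨s, hx.symm⟩

lemma nonempty_Pfun_set (hkn : k - 1 ≤ n) (lam : Fin n → ℝ) :
    {x : ℝ | ∃ s : Finset (Fin n), s.card = k - 1 ∧ x = ∑ i ∈ s, arccot (lam i)}.Nonempty := by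
  obtain ⟨s, -, hs⟩ := Finset.exists_subset_card_eq (s := (univ : Finset (Fin n))) (n := k - 1)
    (by rwa [card_univ, Fintype.card_fin])
  exact ⟨_, s, hs, rfl⟩

lemma sum_arccot_le_Pfun (lam : Fin n → ℝ) {s : Finset (Fin n)} (hs : s.card = k - 1) :
    ∑ i ∈ s, arccot (lam i) ≤ Pfun n k lam :=
  le_csSup (finite_Pfun_set lam).bddAbove ⟨s, hs, rfl⟩

lemma exists_Pfun_eq_sum_arccot (hkn : k - 1 ≤ n) (lam : Fin n → ℝ) :
    ∃ s : Finset (Fin n), s.card = k - 1 ∧ Pfun n k lam = ∑ i ∈ s, arccot (lam i) :=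
  (nonempty_Pfun_set hkn lam).csSup_mem (finite_Pfun_set lam)

lemma Pfun_comp_perm (σ : Equiv.Perm (Fin n)) (lam : Fin n → ℝ) :
    Pfun n k (lam ∘ σ) = Pfun n k lam := by
  have key : ∀ (τ : Equiv.Perm (Fin n)) (μ : Fin n → ℝ),
      {x : ℝ | ∃ s : Finset (Fin n), s.card = k - 1 ∧ x = ∑ i ∈ s, arccot ((μ ∘ τ) i)} ⊆
        {x : ℝ | ∃ s : Finset (Fin n), s.card = k - 1 ∧ x = ∑ i ∈ s, arccot (μ i)} := by
    rintro τ μ _ ⟨s, hs, rfl⟩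
    exact ⟨s.map τ.toEmbedding, by rw [card_map, hs], by simp [sum_map]⟩
  refine congrArg sSup (Subset.antisymm (key σ lam) ?_)
  simpa [Function.comp_def] using key σ.symm (lam ∘ σ)

lemma Pfun_mem_Ioo (hk : 2 ≤ k) (hkn : k - 1 ≤ n) {lam : Fin n → ℝ} (h : lam ∈ gammaSet univ) :
    Pfun n k lam ∈ Ioo 0 π := by
  obtain ⟨s, hs, hP⟩ := exists_Pfun_eq_sum_arccot hkn lam
  rw [hP]
  exact sum_arccot_mem_Ioo (card_pos.1 (by omega)) (gammaSet_anti (subset_univ s) h)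

lemma concaveOn_cot_Pfun (hk : 2 ≤ k) (hkn : k - 1 ≤ n) :
    ConcaveOn ℝ (gammaSet univ) (fun lam => cot (Pfun n k lam)) := by
  refine ⟨(concaveOn_cot_sum_arccot (univ_nonempty_iff.2 ⟨⟨0, by omega⟩⟩)).1, ?_⟩
  intro x hx y hy a b ha hb hab
  obtain ⟨s, hs, hP⟩ := exists_Pfun_eq_sum_arccot hkn (a • x + b • y)
  have hsne : s.Nonempty := card_pos.1 (by omega)
  have hcot_le : ∀ lam ∈ gammaSet univ, cot (Pfun n k lam) ≤ cot (∑ i ∈ s, arccot (lam i)) :=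
    fun lam h => strictAntiOn_cot.antitoneOn
      (sum_arccot_mem_Ioo hsne (gammaSet_anti (subset_univ s) h)) (Pfun_mem_Ioo hk hkn h)
      (sum_arccot_le_Pfun lam hs)
  simp only [smul_eq_mul, hP]
  calc a * cot (Pfun n k x) + b * cot (Pfun n k y)
      ≤ a * cot (∑ i ∈ s, arccot (x i)) + b * cot (∑ i ∈ s, arccot (y i)) := by
        gcongr
        exacts [hcot_le x hx, hcot_le y hy]
    _ ≤ cot (∑ i ∈ s, arccot ((a • x + b • y) i)) :=
        (concaveOn_cot_sum_arccot hsne).2 (gammaSet_anti (subset_univ s) hx)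
          (gammaSet_anti (subset_univ s) hy) ha hb hab

end Pfun

section DoublyStochastic

variable {ι : Type*} [Fintype ι] [DecidableEq ι] {D : Matrix ι ι ℝ}

lemma exists_mulVec_eq_sum_perm_of_mem_doublyStochastic (hD : D ∈ doublyStochastic ℝ ι) :
    ∃ w : Equiv.Perm ι → ℝ, (∀ σ, 0 ≤ w σ) ∧ ∑ σ, w σ = 1 ∧
      ∀ x : ι → ℝ, D *ᵥ x = ∑ σ, w σ • (x ∘ σ) := by
  obtain ⟨w, hw0, hw1, hwD⟩ := exists_eq_sum_perm_of_mem_doublyStochastic hD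
  refine ⟨w, hw0, hw1, fun x => ?_⟩
  simp [← hwD, Matrix.sum_mulVec, Matrix.smul_mulVec, Matrix.permMatrix_mulVec]

variable {S : Set (ι → ℝ)}

lemma Convex.mulVec_mem_of_mem_doublyStochastic (hS : Convex ℝ S)
    (hSσ : ∀ σ : Equiv.Perm ι, ∀ x ∈ S, x ∘ σ ∈ S)
    (hD : D ∈ doublyStochastic ℝ ι) {x : ι → ℝ} (hx : x ∈ S) : D *ᵥ x ∈ S := by
  obtain ⟨w, hw0, hw1, hDx⟩ := exists_mulVec_eq_sum_perm_of_mem_doublyStochastic hD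
  rw [hDx]
  exact hS.sum_mem (fun σ _ => hw0 σ) hw1 (fun σ _ => hSσ σ x hx)

lemma ConcaveOn.le_apply_mulVec_of_mem_doublyStochastic {f : (ι → ℝ) → ℝ} (hf : ConcaveOn ℝ S f)
    (hSσ : ∀ σ : Equiv.Perm ι, ∀ x ∈ S, x ∘ σ ∈ S)
    (hfσ : ∀ σ : Equiv.Perm ι, ∀ x ∈ S, f (x ∘ σ) = f x) (hD : D ∈ doublyStochastic ℝ ι)
    {x : ι → ℝ} (hx : x ∈ S) : f x ≤ f (D *ᵥ x) := by
  obtain ⟨w, hw0, hw1, hDx⟩ := exists_mulVec_eq_sum_perm_of_mem_doublyStochastic hD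
  calc f x = ∑ σ, w σ • f (x ∘ σ) := by simp only [hfσ _ x hx, ← sum_smul, hw1, one_smul]
    _ ≤ f (D *ᵥ x) := by
      rw [hDx]
      exact hf.le_map_sum (fun σ _ => hw0 σ) hw1 (fun σ _ => hSσ σ x hx)

end DoublyStochastic

section Hermitian

variable {ι : Type*} [Fintype ι] [DecidableEq ι]

lemma Matrix.sum_normSq_row_of_mem_unitaryGroup {W : Matrix ι ι ℂ}
    (hW : W ∈ Matrix.unitaryGroup ι ℂ) (i : ι) : ∑ j, Complex.normSq (W i j) = 1 := by
  have h := congrFun (congrFun (Matrix.mem_unitaryGroup_iff.1 hW) i) i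
  simp only [Matrix.mul_apply, Matrix.one_apply_eq, Matrix.star_apply, Complex.star_def,
    Complex.mul_conj] at h
  exact_mod_cast h

lemma Matrix.map_normSq_mem_doublyStochastic {W : Matrix ι ι ℂ}
    (hW : W ∈ Matrix.unitaryGroup ι ℂ) : W.map Complex.normSq ∈ doublyStochastic ℝ ι := by
  refine mem_doublyStochastic_iff_sum.2 ⟨fun i j => Complex.normSq_nonneg _,
    Matrix.sum_normSq_row_of_mem_unitaryGroup hW, fun j => ?_⟩
  have hWt : star W ∈ Matrix.unitaryGroup ι ℂ := Unitary.star_mem hW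
  simpa [Matrix.star_apply] using Matrix.sum_normSq_row_of_mem_unitaryGroup hWt j

lemma Matrix.star_mul_diagonal_mul_apply_self (W : Matrix ι ι ℂ) (d : ι → ℝ) (i : ι) :
    (star W * Matrix.diagonal (Complex.ofReal ∘ d) * W) i i =
      ((star W).map Complex.normSq *ᵥ d) i := by
  rw [Matrix.mul_assoc, Matrix.mul_apply, Matrix.mulVec, dotProduct]
  push_cast
  refine sum_congr rfl fun j _ => ?_
  rw [Matrix.diagonal_mul, Matrix.map_apply, Matrix.star_apply, Complex.star_def,
    Complex.normSq_conj, Complex.normSq_eq_conj_mul_self, Function.comp_apply]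
  ring

lemma Matrix.IsHermitian.exists_diag_eq_mulVec_eigenvalues {A : Matrix ι ι ℂ} (hA : A.IsHermitian)
    {U : Matrix ι ι ℂ} (hU : U ∈ Matrix.unitaryGroup ι ℂ) :
    ∃ D ∈ doublyStochastic ℝ ι, ∀ i, (star U * A * U) i i = ((D *ᵥ hA.eigenvalues) i : ℂ) := by
  set V : Matrix ι ι ℂ := ↑hA.eigenvectorUnitary
  have hW : star V * U ∈ Matrix.unitaryGroup ι ℂ :=
    mul_mem (Unitary.star_mem hA.eigenvectorUnitary.2) hU
  refine ⟨(star (star V * U)).map Complex.normSq,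
    Matrix.map_normSq_mem_doublyStochastic (Unitary.star_mem hW), fun i => ?_⟩
  rw [← Matrix.star_mul_diagonal_mul_apply_self]
  conv_lhs => rw [hA.spectral_theorem]
  simp only [Unitary.conjStarAlgAut_apply, star_mul, star_star, Matrix.mul_assoc]
  rfl

lemma Matrix.IsHermitian.star_eigenvectorUnitary_mul_mul_apply_self {A : Matrix ι ι ℂ}
    (hA : A.IsHermitian) (i : ι) :
    (star (hA.eigenvectorUnitary : Matrix ι ι ℂ) * A * hA.eigenvectorUnitary) i i =
      hA.eigenvalues i := by
  have h := hA.conjStarAlgAut_star_eigenvectorUnitary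
  rw [Unitary.conjStarAlgAut_star_apply] at h
  rw [h, Matrix.diagonal_apply_eq]
  rfl

lemma ConcaveOn.le_apply_eigenvalues_smul_add {S : Set (ι → ℝ)} {f : (ι → ℝ) → ℝ}
    (hf : ConcaveOn ℝ S f) (hSσ : ∀ σ : Equiv.Perm ι, ∀ x ∈ S, x ∘ σ ∈ S)
    (hfσ : ∀ σ : Equiv.Perm ι, ∀ x ∈ S, f (x ∘ σ) = f x)
    {B B' : Matrix ι ι ℂ} (hB : B.IsHermitian) (hB' : B'.IsHermitian)
    (hBS : hB.eigenvalues ∈ S) (hB'S : hB'.eigenvalues ∈ S) {s : ℝ} (hs0 : 0 ≤ s) (hs1 : s ≤ 1)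
    (hC : (s • B + (1 - s) • B').IsHermitian) :
    s * f hB.eigenvalues + (1 - s) * f hB'.eigenvalues ≤ f hC.eigenvalues := by
  obtain ⟨D, hD, hdiag⟩ := hB.exists_diag_eq_mulVec_eigenvalues hC.eigenvectorUnitary.2
  obtain ⟨D', hD', hdiag'⟩ := hB'.exists_diag_eq_mulVec_eigenvalues hC.eigenvectorUnitary.2
  have heig : hC.eigenvalues = s • (D *ᵥ hB.eigenvalues) + (1 - s) • (D' *ᵥ hB'.eigenvalues) := by
    funext i
    have h := hC.star_eigenvectorUnitary_mul_mul_apply_self i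
    simp only [Matrix.mul_add, Matrix.add_mul, Matrix.mul_smul, Matrix.smul_mul, Matrix.add_apply,
      Matrix.smul_apply, hdiag, hdiag', Complex.real_smul] at h
    exact_mod_cast h.symm
  have hs1' : 0 ≤ 1 - s := sub_nonneg.2 hs1
  rw [heig]
  calc s * f hB.eigenvalues + (1 - s) * f hB'.eigenvalues
      ≤ s * f (D *ᵥ hB.eigenvalues) + (1 - s) * f (D' *ᵥ hB'.eigenvalues) := by
        gcongr
        exacts [hf.le_apply_mulVec_of_mem_doublyStochastic hSσ hfσ hD hBS,
          hf.le_apply_mulVec_of_mem_doublyStochastic hSσ hfσ hD' hB'S]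
    _ ≤ f (s • (D *ᵥ hB.eigenvalues) + (1 - s) • (D' *ᵥ hB'.eigenvalues)) :=
        hf.2 (hf.1.mulVec_mem_of_mem_doublyStochastic hSσ hD hBS)
          (hf.1.mulVec_mem_of_mem_doublyStochastic hSσ hD' hB'S) hs0 hs1' (by ring)

end Hermitian

theorem cot_Pfun_concave_hermitian (n k : ℕ) (hk : 2 ≤ k) (hkn : k ≤ n)
    (B B' : Matrix (Fin n) (Fin n) ℂ)
    (hB : B.IsHermitian) (hB' : B'.IsHermitian)
    (hΓB : (∑ i, arccot (hB.eigenvalues i)) < π)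
    (hΓB' : (∑ i, arccot (hB'.eigenvalues i)) < π)
    (s : ℝ) (hs0 : 0 ≤ s) (hs1 : s ≤ 1)
    (hC : (s • B + (1 - s) • B').IsHermitian) :
    s * Real.cot (Pfun n k hB.eigenvalues) + (1 - s) * Real.cot (Pfun n k hB'.eigenvalues) ≤
      Real.cot (Pfun n k hC.eigenvalues) :=
  (concaveOn_cot_Pfun hk (by omega)).le_apply_eigenvalues_smul_add
    (fun σ _ h => comp_perm_mem_gammaSet_univ σ h)
    (fun σ lam _ => congrArg cot (Pfun_comp_perm σ lam))
    hB hB' hΓB hΓB' hs0 hs1 hC
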